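/- Let K and M be integers with 1 ≤ M ≤ K−1 and let λ_1, …, λ_K > 0 be real numbers. Then Σ_{w∈{1,…,K}} Σ_{s} p(w,s) = 1, where the inner sum is over all M-element subsets s of {1,…,K}∖{w}; consequently Σ_{w∈{1,…,K}} p_W(w) = 1, i.e., p is a well-defined joint probability mass function on pairs (w,s). -/

import Mathlib

/-- `lbar K lam T = Σ_{k ∈ {1,…,K} \ T} λ_k`. -/
noncomputable def lbar (K : ℕ) (lam : ℕ → ℝ) (T : Finset ℕ) : ℝ :=
  ∑ k ∈ Finset.Icc 1 K \ T, lam k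

/-- The joint pmf `p(w, s) = (1 / C(K,M)) · λ_w / λ_s̄`. -/
noncomputable def pjoint (K M : ℕ) (lam : ℕ → ℝ) (w : ℕ) (s : Finset ℕ) : ℝ :=
  (1 / (K.choose M : ℝ)) * (lam w / lbar K lam s)

/-- The marginal `p_W(w) = Σ_s p(w, s)`, summed over `M`-subsets of `{1,…,K} \ {w}`. -/
noncomputable def pW (K M : ℕ) (lam : ℕ → ℝ) (w : ℕ) : ℝ :=
  ∑ s ∈ Finset.powersetCard M ((Finset.Icc 1 K).erase w), pjoint K M lam w s

/-!
Exchange the two sums: summing over pairs `(w, s)` with `w ∉ s` is the same as summing first over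
the `M`-subsets `s` and then over `w` in the complement of `s`. For fixed `s` the inner sum is
`(1 / C(K,M)) · (Σ_{w ∉ s} λ_w) / λ_s̄ = 1 / C(K,M)`, and there are `C(K,M)` such subsets.
-/

open Finset

theorem Finset.sum_powersetCard_erase_comm {α β : Type*} [DecidableEq α] [AddCommMonoid β]
    (U : Finset α) (M : ℕ) (f : α → Finset α → β) :
    ∑ w ∈ U, ∑ s ∈ (U.erase w).powersetCard M, f w s =
      ∑ s ∈ U.powersetCard M, ∑ w ∈ U \ s, f w s := by
  apply sum_comm'
  intro w s
  simp only [mem_powersetCard, mem_sdiff, subset_erase]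
  tauto

section

variable {K : ℕ} {lam : ℕ → ℝ}

theorem lbar_pos (hpos : ∀ i, 1 ≤ i → i ≤ K → 0 < lam i) {s : Finset ℕ} (hs : #s < K) :
    0 < lbar K lam s := by
  have hne : (Icc 1 K \ s).Nonempty := by
    rw [sdiff_nonempty]
    intro hsub
    have := card_le_card hsub
    rw [Nat.card_Icc] at this
    omega
  refine sum_pos (fun i hi => ?_) hne
  obtain ⟨hi1, hiK⟩ := mem_Icc.mp (mem_sdiff.mp hi).1
  exact hpos i hi1 hiK

theorem sum_sdiff_pjoint (M : ℕ) {s : Finset ℕ} (hs : lbar K lam s ≠ 0) :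
    ∑ w ∈ Icc 1 K \ s, pjoint K M lam w s = 1 / (K.choose M : ℝ) := by
  simp only [pjoint]
  rw [← mul_sum, ← sum_div]
  change 1 / (K.choose M : ℝ) * (lbar K lam s / lbar K lam s) = _
  rw [div_self hs, mul_one]

end

theorem stmt15_general {K M : ℕ} (hMK : M + 1 ≤ K) (lam : ℕ → ℝ)
    (hpos : ∀ i, 1 ≤ i → i ≤ K → 0 < lam i) :
    (∑ w ∈ Finset.Icc 1 K,
        ∑ s ∈ Finset.powersetCard M ((Finset.Icc 1 K).erase w), pjoint K M lam w s) = 1 ∧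
    (∑ w ∈ Finset.Icc 1 K, pW K M lam w) = 1 := by
  have inner : ∀ s ∈ (Icc 1 K).powersetCard M,
      ∑ w ∈ Icc 1 K \ s, pjoint K M lam w s = 1 / (K.choose M : ℝ) := fun s hs =>
    sum_sdiff_pjoint M (lbar_pos hpos (by rw [(mem_powersetCard.mp hs).2]; omega)).ne'
  have hchoose : (K.choose M : ℝ) ≠ 0 := by
    exact_mod_cast (Nat.choose_pos (by omega : M ≤ K)).ne'
  have total : ∑ w ∈ Icc 1 K, ∑ s ∈ ((Icc 1 K).erase w).powersetCard M,
      pjoint K M lam w s = 1 := by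
    rw [sum_powersetCard_erase_comm, sum_congr rfl inner, sum_const, card_powersetCard,
      Nat.card_Icc, Nat.add_sub_cancel, nsmul_eq_mul, mul_one_div_cancel hchoose]
  exact ⟨total, total⟩

theorem stmt15 {K M : ℕ} (hM : 1 ≤ M) (hMK : M + 1 ≤ K) (lam : ℕ → ℝ)
    (hpos : ∀ i, 1 ≤ i → i ≤ K → 0 < lam i) :
    (∑ w ∈ Finset.Icc 1 K,
        ∑ s ∈ Finset.powersetCard M ((Finset.Icc 1 K).erase w), pjoint K M lam w s) = 1 ∧
    (∑ w ∈ Finset.Icc 1 K, pW K M lam w) = 1 :=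
  stmt15_general hMK lam hpos
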